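/- Continuation (bubbling invocation) inversion for λ_eff^Λ: if Γ; r ⊢ #op(σ̄^I, w, E) : D | ε, then there exist ᾱ^I, β̄^J, C̄^I, A, B, v, ε′ such that: each σ_i = ∀β̄^J.C_i; w = Λβ̄^J.v; E is an evaluation context binding exactly β̄^J at its hole; ε′ ⊆ ε; ty(op) = ∀ᾱ^I. A ↪ B; op ∈ ε′; Γ ⊢ ∀β̄^J.C_i for each i ∈ I; Γ, β̄^J; r ⊢ v : A[C̄^I/ᾱ^I] | ε′; and Γ ⊢ E : ∀β̄^J.(B[C̄^I/ᾱ^I]) ⊸ D | ε′. -/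

import Mathlib

set_option autoImplicit true
set_option maxHeartbeats 1000000

namespace EffLam

/-! ## Types, effects, schemes -/

/-- Effects: finite sets of effect-operation names. -/
abbrev Eff := Finset ℕ

/-- Types of `λ_eff^Λ` / `λ_eff^let`: type variables, base types, effectful function types. -/
inductive Ty : Type
  | tvar  : ℕ → Ty
  | base  : ℕ → Ty
  | arrow : Ty → Eff → Ty → Ty

/-- The distinguished base type ⊥. -/
def Ty.bot : Ty := .base 0

/-- Free type variables of a type. -/
def Ty.ftv : Ty → Finset ℕ
  | .tvar a => {a}
  | .base _ => ∅
  | .arrow A _ B => A.ftv ∪ B.ftv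

/-- (Partial) type substitutions. -/
abbrev TySubst := ℕ → Option Ty

/-- Remove the variables `as` from the domain of a substitution (for binders). -/
def mask (s : TySubst) (as : List ℕ) : TySubst :=
  fun b => if b ∈ as then none else s b

/-- Simultaneous substitution `[As/as]`. -/
def subList (as : List ℕ) (As : List Ty) : TySubst :=
  fun b => (as.zip As).lookup b

/-- Single substitution `[A/a]`. -/
def sub1 (a : ℕ) (A : Ty) : TySubst := fun b => if b = a then some A else none

/-- Substituting ⊥ for every variable in `bs`. -/
def botSub (bs : List ℕ) : TySubst := fun a => if a ∈ bs then some Ty.bot else none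

/-- Applying a type substitution to a type. -/
def Ty.subst (s : TySubst) : Ty → Ty
  | .tvar a => (s a).getD (.tvar a)
  | .base i => .base i
  | .arrow A ε B => .arrow (A.subst s) ε (B.subst s)

/-- Type schemes `σ ::= A | ∀α.σ`. -/
inductive Scheme : Type
  | ty  : Ty → Scheme
  | all : ℕ → Scheme → Scheme

/-- Prefix a scheme with quantifiers `∀ᾱ.σ`. -/
def Scheme.allEach (as : List ℕ) (σ : Scheme) : Scheme := as.foldr .all σ

/-- The type scheme `∀ᾱ.A`. -/
def Scheme.close (as : List ℕ) (A : Ty) : Scheme := Scheme.allEach as (.ty A)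

/-- Free type variables of a scheme. -/
def Scheme.ftv : Scheme → Finset ℕ
  | .ty A => A.ftv
  | .all a σ => σ.ftv.erase a

/-- (Naive) substitution on schemes. -/
def Scheme.subst (s : TySubst) : Scheme → Scheme
  | .ty A => .ty (A.subst s)
  | .all a σ => .all a (σ.subst (mask s [a]))

/-- First-order closed types `ι₁ →⟨⟩ ⋯ →⟨⟩ ιₙ` for constants. -/
inductive FirstOrderTy : Ty → Prop
  | base : FirstOrderTy (.base ι)
  | arrow : FirstOrderTy B → FirstOrderTy (.arrow (.base ι) ∅ B)

/-- A global signature: types of constants, the denotation function ζ for constants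
(with the assumptions of the paper), and signatures `ty(op) = ∀ᾱ. A ↪ B` of effect
operations. -/
structure Sig where
  tyc : ℕ → Ty
  tyc_fo : ∀ c, FirstOrderTy (tyc c)
  zeta : ℕ → ℕ → Option ℕ
  zeta_def : ∀ c₁ c₂, (zeta c₁ c₂).isSome ↔
      ∃ ι A, tyc c₁ = .arrow (.base ι) ∅ A ∧ tyc c₂ = .base ι
  zeta_ty : ∀ c₁ c₂ c ι A, zeta c₁ c₂ = some c →
      tyc c₁ = .arrow (.base ι) ∅ A → tyc c = A
  opSig : ℕ → List ℕ × Ty × Ty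
  opSig_ftv : ∀ o, (opSig o).2.1.ftv ∪ (opSig o).2.2.ftv ⊆ (opSig o).1.toFinset

/-! ## Typing contexts -/

inductive CtxEntry : Type
  | evar : ℕ → Scheme → CtxEntry
  | tvar : ℕ → CtxEntry

/-- Typing contexts, with the most recent entry at the head of the list.
`Γ₁, Γ₂` is written `Γ₂ ++ Γ₁`. -/
abbrev Ctx := List CtxEntry

/-- The context `ᾱ` consisting of type-variable declarations. -/
def tvarsCtx (as : List ℕ) : Ctx := as.map .tvar

def CtxEntry.domE : CtxEntry → ℕ ⊕ ℕ
  | .evar x _ => .inl x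
  | .tvar a => .inr a

/-- `dom(Γ)`: term variables (inl) and type variables (inr) declared in Γ. -/
def Ctx.dom (Γ : Ctx) : Finset (ℕ ⊕ ℕ) := (Γ.map CtxEntry.domE).toFinset

/-- The type variables declared in Γ. -/
def Ctx.tvars (Γ : Ctx) : Finset ℕ :=
  Γ.foldr (fun it s => match it with | .tvar a => insert a s | _ => s) ∅

/-- `Γ ⊢ A`. -/
def wfTy (Γ : Ctx) (A : Ty) : Prop := A.ftv ⊆ Ctx.tvars Γ

/-- `Γ ⊢ σ`. -/
def wfScheme (Γ : Ctx) (σ : Scheme) : Prop := σ.ftv ⊆ Ctx.tvars Γ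

/-- Well-formedness `⊢ Γ` of typing contexts. -/
inductive CtxWF : Ctx → Prop
  | nil : CtxWF []
  | evar : CtxWF Γ → wfScheme Γ σ → Sum.inl x ∉ Ctx.dom Γ → CtxWF (.evar x σ :: Γ)
  | tvar : CtxWF Γ → Sum.inr a ∉ Ctx.dom Γ → CtxWF (.tvar a :: Γ)

/-- A context consisting only of type variables (ranged over by Δ in the paper). -/
def TyVarCtx (Γ : Ctx) : Prop := ∀ it ∈ Γ, ∃ a, it = CtxEntry.tvar a

/-- Substitution on context entries / contexts. -/
def CtxEntry.subst (s : TySubst) : CtxEntry → CtxEntry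
  | .evar x σ => .evar x (σ.subst s)
  | .tvar a => .tvar a

def Ctx.subst (s : TySubst) (Γ : Ctx) : Ctx := Γ.map (CtxEntry.subst s)

/-! ## Resumption types of λ_eff^Λ -/

/-- Resumption types `r ::= none | (ᾱ, A, B →ε C)`. -/
abbrev Resum := Option (List ℕ × Ty × Ty × Eff × Ty)

def Resum.tyvars : Resum → Finset ℕ
  | none => ∅
  | some (as, _, _, _, _) => as.toFinset

def Resum.subst (s : TySubst) : Resum → Resum
  | none => none
  | some (as, A, B, ε, C) =>
      some (as, A.subst (mask s as), B.subst (mask s as), ε, C.subst s)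

/-- The side condition on resumption types:
`ftv(A) ∪ ftv(B) ⊆ {ᾱ}` and `ftv(C) ∩ {ᾱ} = ∅`. -/
def Resum.WF : Resum → Prop
  | none => True
  | some (as, A, B, _, C) => A.ftv ∪ B.ftv ⊆ as.toFinset ∧ C.ftv ∩ as.toFinset = ∅
/-! ## Syntax of λ_eff^Λ -/

mutual
/-- Terms of `λ_eff^Λ`.  In `opCont o σs ᾱ w E` (the paper's `#op(σ̄, Λᾱ.w, E^ᾱ)`),
the polymorphic value `Λᾱ.w` is represented by the binder list `ᾱ` and the value `w`. -/
inductive Tm : Type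
  | var    : ℕ → List Ty → Tm
  | const  : ℕ → Tm
  | abs    : ℕ → Tm → Tm
  | app    : Tm → Tm → Tm
  | letin  : ℕ → List ℕ → Tm → Tm → Tm
  | op     : ℕ → List Ty → Tm → Tm
  | opCont : ℕ → List Scheme → List ℕ → Tm → ECtx → Tm
  | handle : Tm → Handler → Tm
  | resume : List ℕ → ℕ → Tm → Tm

/-- Handlers of `λ_eff^Λ`. -/
inductive Handler : Type
  | ret : ℕ → Tm → Handler
  | opH : Handler → List ℕ → ℕ → ℕ → Tm → Handler

/-- Evaluation contexts of `λ_eff^Λ`. -/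
inductive ECtx : Type
  | hole : ECtx
  | appL : ECtx → Tm → ECtx
  | appR : Tm → ECtx → ECtx
  | letE : ℕ → List ℕ → ECtx → Tm → ECtx
  | opE  : ℕ → List Ty → ECtx → ECtx
  | handleE : ECtx → Handler → ECtx
end

/-- Values `v ::= c | λx.e`. -/
inductive IsValue : Tm → Prop
  | const : IsValue (.const c)
  | abs : IsValue (.abs x e)

/-- The type variables `ᾱ` bound above the hole of an evaluation context `E^ᾱ`. -/
def ECtx.binders : ECtx → List ℕ
  | .hole => []
  | .appL E _ => E.binders
  | .appR _ E => E.binders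
  | .letE _ as E _ => as ++ E.binders
  | .opE _ _ E => E.binders
  | .handleE E _ => E.binders

/-- Filling the hole of an evaluation context: `E[e]`. -/
def ECtx.fill : ECtx → Tm → Tm
  | .hole, e => e
  | .appL E e₂, e => .app (E.fill e) e₂
  | .appR v E, e => .app v (E.fill e)
  | .letE x as E e₂, e => .letin x as (E.fill e) e₂
  | .opE o As E, e => .op o As (E.fill e)
  | .handleE E h, e => .handle (E.fill e) h

/-- `ops(h)`: the effect operations handled by `h`. -/
def Handler.ops : Handler → Finset ℕ
  | .ret _ _ => ∅
  | .opH h _ o _ _ => insert o h.ops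

/-- `h^return`. -/
def Handler.retClause : Handler → ℕ × Tm
  | .ret x e => (x, e)
  | .opH h _ _ _ _ => h.retClause

/-- `h^op`. -/
def Handler.opClause : Handler → ℕ → Option (List ℕ × ℕ × Tm)
  | .ret _ _, _ => none
  | .opH h as o x e, o' => if o' = o then some (as, x, e) else h.opClause o'

/-! ### Substitutions and free variables of λ_eff^Λ terms -/

mutual
/-- Type substitution `e[Ā/ᾱ]` on terms. -/
def Tm.tsub (s : TySubst) : Tm → Tm
  | .var x As => .var x (As.map (Ty.subst s))
  | .const c => .const c
  | .abs x e => .abs x (Tm.tsub s e)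
  | .app e₁ e₂ => .app (Tm.tsub s e₁) (Tm.tsub s e₂)
  | .letin x as e₁ e₂ => .letin x as (Tm.tsub (mask s as) e₁) (Tm.tsub s e₂)
  | .op o As e => .op o (As.map (Ty.subst s)) (Tm.tsub s e)
  | .opCont o σs as w E =>
      .opCont o (σs.map (Scheme.subst s)) as (Tm.tsub (mask s as) w) (ECtx.tsubE s E)
  | .handle e h => .handle (Tm.tsub s e) (Handler.tsubH s h)
  | .resume as x e => .resume as x (Tm.tsub (mask s as) e)

def Handler.tsubH (s : TySubst) : Handler → Handler
  | .ret x e => .ret x (Tm.tsub s e)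
  | .opH h as o x e => .opH (Handler.tsubH s h) as o x (Tm.tsub (mask s as) e)

def ECtx.tsubE (s : TySubst) : ECtx → ECtx
  | .hole => .hole
  | .appL E e => .appL (ECtx.tsubE s E) (Tm.tsub s e)
  | .appR v E => .appR (Tm.tsub s v) (ECtx.tsubE s E)
  | .letE x as E e => .letE x as (ECtx.tsubE (mask s as) E) (Tm.tsub s e)
  | .opE o As E => .opE o (As.map (Ty.subst s)) (ECtx.tsubE s E)
  | .handleE E h => .handleE (ECtx.tsubE s E) (Handler.tsubH s h)
end

mutual
/-- Substitution `e[Λᾱ.v/x]` of a polymorphic value for a term variable, with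
`(x Ā)[Λᾱ.v/x] = v[Ā/ᾱ]`. -/
def Tm.vsub (x : ℕ) (as : List ℕ) (v : Tm) : Tm → Tm
  | .var y Bs => if y = x then Tm.tsub (subList as Bs) v else .var y Bs
  | .const c => .const c
  | .abs y e => .abs y (if y = x then e else Tm.vsub x as v e)
  | .app e₁ e₂ => .app (Tm.vsub x as v e₁) (Tm.vsub x as v e₂)
  | .letin y bs e₁ e₂ =>
      .letin y bs (Tm.vsub x as v e₁) (if y = x then e₂ else Tm.vsub x as v e₂)
  | .op o As e => .op o As (Tm.vsub x as v e)
  | .opCont o σs bs w E => .opCont o σs bs (Tm.vsub x as v w) (ECtx.vsubE x as v E)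
  | .handle e h => .handle (Tm.vsub x as v e) (Handler.vsubH x as v h)
  | .resume bs y e => .resume bs y (if y = x then e else Tm.vsub x as v e)

def Handler.vsubH (x : ℕ) (as : List ℕ) (v : Tm) : Handler → Handler
  | .ret y e => .ret y (if y = x then e else Tm.vsub x as v e)
  | .opH h bs o y e =>
      .opH (Handler.vsubH x as v h) bs o y (if y = x then e else Tm.vsub x as v e)

def ECtx.vsubE (x : ℕ) (as : List ℕ) (v : Tm) : ECtx → ECtx
  | .hole => .hole
  | .appL E e => .appL (ECtx.vsubE x as v E) (Tm.vsub x as v e)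
  | .appR w E => .appR (Tm.vsub x as v w) (ECtx.vsubE x as v E)
  | .letE y bs E e =>
      .letE y bs (ECtx.vsubE x as v E) (if y = x then e else Tm.vsub x as v e)
  | .opE o As E => .opE o As (ECtx.vsubE x as v E)
  | .handleE E h => .handleE (ECtx.vsubE x as v E) (Handler.vsubH x as v h)
end

def ftvList (As : List Ty) : Finset ℕ := As.foldr (fun A s => A.ftv ∪ s) ∅

def ftvSchemes (σs : List Scheme) : Finset ℕ := σs.foldr (fun σ s => σ.ftv ∪ s) ∅

mutual
/-- Free type variables of a term. -/
def Tm.ftv : Tm → Finset ℕ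
  | .var _ As => ftvList As
  | .const _ => ∅
  | .abs _ e => Tm.ftv e
  | .app e₁ e₂ => Tm.ftv e₁ ∪ Tm.ftv e₂
  | .letin _ as e₁ e₂ => (Tm.ftv e₁ \ as.toFinset) ∪ Tm.ftv e₂
  | .op _ As e => ftvList As ∪ Tm.ftv e
  | .opCont _ σs as w E => ftvSchemes σs ∪ (Tm.ftv w \ as.toFinset) ∪ ECtx.ftvE E
  | .handle e h => Tm.ftv e ∪ Handler.ftvH h
  | .resume as _ e => Tm.ftv e \ as.toFinset

def Handler.ftvH : Handler → Finset ℕ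
  | .ret _ e => Tm.ftv e
  | .opH h as _ _ e => Handler.ftvH h ∪ (Tm.ftv e \ as.toFinset)

def ECtx.ftvE : ECtx → Finset ℕ
  | .hole => ∅
  | .appL E e => ECtx.ftvE E ∪ Tm.ftv e
  | .appR v E => Tm.ftv v ∪ ECtx.ftvE E
  | .letE _ as E e => (ECtx.ftvE E \ as.toFinset) ∪ Tm.ftv e
  | .opE _ As E => ftvList As ∪ ECtx.ftvE E
  | .handleE E h => ECtx.ftvE E ∪ Handler.ftvH h
end

mutual
/-- Free term variables of a term. -/
def Tm.fv : Tm → Finset ℕ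
  | .var x _ => {x}
  | .const _ => ∅
  | .abs x e => (Tm.fv e).erase x
  | .app e₁ e₂ => Tm.fv e₁ ∪ Tm.fv e₂
  | .letin x _ e₁ e₂ => Tm.fv e₁ ∪ (Tm.fv e₂).erase x
  | .op _ _ e => Tm.fv e
  | .opCont _ _ _ w E => Tm.fv w ∪ ECtx.fvE E
  | .handle e h => Tm.fv e ∪ Handler.fvH h
  | .resume _ x e => (Tm.fv e).erase x

def Handler.fvH : Handler → Finset ℕ
  | .ret x e => (Tm.fv e).erase x
  | .opH h _ _ x e => Handler.fvH h ∪ (Tm.fv e).erase x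

def ECtx.fvE : ECtx → Finset ℕ
  | .hole => ∅
  | .appL E e => ECtx.fvE E ∪ Tm.fv e
  | .appR v E => Tm.fv v ∪ ECtx.fvE E
  | .letE x _ E e => ECtx.fvE E ∪ (Tm.fv e).erase x
  | .opE _ _ E => ECtx.fvE E
  | .handleE E h => ECtx.fvE E ∪ Handler.fvH h
end
/-! ### Continuation substitution -/

mutual
/-- Continuation substitution `e[Ec/resume]^{∀β̄.C̄}_{Λβ̄.v}` of the paper, as a relation:
`CSub Ec bs Cs v e e'` means that `e'` is the result of substituting the continuation
`Ec` (with binders `bs = β̄`) for resumptions in `e`, with invocation type arguments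
`Cs = C̄` and invocation argument `v`. -/
inductive CSub (Ec : ECtx) (bs : List ℕ) (Cs : List Ty) (v : Tm) : Tm → Tm → Prop
  | var : CSub Ec bs Cs v (.var x As) (.var x As)
  | const : CSub Ec bs Cs v (.const c) (.const c)
  | abs : CSub Ec bs Cs v e e' → CSub Ec bs Cs v (.abs x e) (.abs x e')
  | app : CSub Ec bs Cs v e₁ e₁' → CSub Ec bs Cs v e₂ e₂' →
      CSub Ec bs Cs v (.app e₁ e₂) (.app e₁' e₂')
  | letin : CSub Ec bs Cs v e₁ e₁' → CSub Ec bs Cs v e₂ e₂' →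
      CSub Ec bs Cs v (.letin x as e₁ e₂) (.letin x as e₁' e₂')
  | op : CSub Ec bs Cs v e e' → CSub Ec bs Cs v (.op o As e) (.op o As e')
  | opCont : CSub Ec bs Cs v w w' →
      CSub Ec bs Cs v (.opCont o σs as w E) (.opCont o σs as w' E)
  | handle : CSub Ec bs Cs v e e' → CSubH Ec bs Cs v h h' →
      CSub Ec bs Cs v (.handle e h) (.handle e' h')
  | resume : CSub Ec bs Cs v e e' →
      (Tm.ftv e ∪ ECtx.ftvE Ec) ∩ bs.toFinset = ∅ →
      y ∉ Tm.fv e ∪ Tm.fv e' ∪ ECtx.fvE Ec ∪ Tm.fv v →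
      CSub Ec bs Cs v (.resume gs z e)
        (.letin y bs (Tm.vsub z [] v (Tm.tsub (subList gs Cs) e'))
           (ECtx.fill Ec (.var y (bs.map Ty.tvar))))

/-- Continuation substitution on handlers: it applies only to the return clause. -/
inductive CSubH (Ec : ECtx) (bs : List ℕ) (Cs : List Ty) (v : Tm) : Handler → Handler → Prop
  | ret : CSub Ec bs Cs v e e' → CSubH Ec bs Cs v (.ret x e) (.ret x e')
  | opH : CSubH Ec bs Cs v h h' → CSubH Ec bs Cs v (.opH h as o x e) (.opH h' as o x e)
end

/-! ### Operational semantics of λ_eff^Λ -/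

/-- The reduction relation `e₁ ⇝ e₂` of Figure 4. -/
inductive Red (S : Sig) : Tm → Tm → Prop
  | const : S.zeta c₁ c₂ = some c →
      Red S (.app (.const c₁) (.const c₂)) (.const c)
  | beta : IsValue v →
      Red S (.app (.abs x e) v) (Tm.vsub x [] v e)
  | letv : IsValue v →
      Red S (.letin x as v e) (Tm.vsub x as v e)
  | ret : IsValue v → Handler.retClause h = (x, e) →
      Red S (.handle v h) (Tm.vsub x [] v e)
  | opv : IsValue v →
      Red S (.op o As v) (.opCont o (As.map .ty) [] v .hole)
  | opApp1 :
      Red S (.app (.opCont o σs bs w E) e₂) (.opCont o σs bs w (.appL E e₂))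
  | opApp2 : IsValue v₁ →
      Red S (.app v₁ (.opCont o σs bs w E)) (.opCont o σs bs w (.appR v₁ E))
  | opOp :
      Red S (.op o' As (.opCont o σs bs w E)) (.opCont o σs bs w (.opE o' As E))
  | opHandle : o ∉ Handler.ops h →
      Red S (.handle (.opCont o σs bs w E) h) (.opCont o σs bs w (.handleE E h))
  | opLet :
      Red S (.letin x as (.opCont o σs bs w E) e₂)
        (.opCont o (σs.map (Scheme.allEach as)) (as ++ bs) w (.letE x as E e₂))
  | handle :
      Handler.opClause h o = some (αs, x, e) →
      IsValue v →
      ECtx.binders E = bs →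
      CSub (.handleE E h) bs As v e e' →
      Red S (.handle (.opCont o (As.map (Scheme.close bs)) bs v E) h)
        (Tm.vsub x [] (Tm.tsub (botSub bs) v)
          (Tm.tsub (subList αs (As.map (Ty.subst (botSub bs)))) e'))

/-- The evaluation relation `e₁ ⟶ e₂` (rule E-Eval). -/
inductive Eval (S : Sig) : Tm → Tm → Prop
  | eval : Red S e₁ e₂ → Eval S (ECtx.fill E e₁) (ECtx.fill E e₂)

/-! ### Typing of λ_eff^Λ (Figures 5 and 6) -/

mutual
/-- Term typing `Γ; r ⊢ e : A | ε` of λ_eff^Λ. -/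
inductive TmTy (S : Sig) : Ctx → Resum → Tm → Ty → Eff → Prop
  | var : CtxWF Γ → CtxEntry.evar x (Scheme.close as A) ∈ Γ →
      (∀ B ∈ Bs, wfTy Γ B) → Bs.length = as.length →
      TmTy S Γ r (.var x Bs) (A.subst (subList as Bs)) ε
  | const : CtxWF Γ → TmTy S Γ r (.const c) (S.tyc c) ε
  | abs : TmTy S (.evar x (.ty A) :: Γ) r e B ε' →
      TmTy S Γ r (.abs x e) (.arrow A ε' B) ε
  | app : TmTy S Γ r e₁ (.arrow A ε' B) ε → TmTy S Γ r e₂ A ε → ε' ⊆ ε →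
      TmTy S Γ r (.app e₁ e₂) B ε
  | opI : S.opSig o = (as, A, B) → o ∈ ε →
      (∀ C ∈ Cs, wfTy Γ C) → Cs.length = as.length →
      TmTy S Γ r e (A.subst (subList as Cs)) ε →
      TmTy S Γ r (.op o Cs e) (B.subst (subList as Cs)) ε
  | opCont : S.opSig o = (as, A, B) → o ∈ ε →
      (∀ C ∈ Cs, wfScheme Γ (Scheme.close bs C)) → Cs.length = as.length →
      ECtx.binders E = bs →
      IsValue v →
      TmTy S (tvarsCtx bs ++ Γ) r v (A.subst (subList as Cs)) ε →
      ETy S Γ E (Scheme.close bs (B.subst (subList as Cs))) D ε →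
      TmTy S Γ r (.opCont o (Cs.map (Scheme.close bs)) bs v E) D ε
  | weak : TmTy S Γ r e A ε → ε ⊆ ε' → TmTy S Γ r e A ε'
  | handle : TmTy S Γ r e B ε' → HTy S Γ r h B ε' A ε →
      TmTy S Γ r (.handle e h) A ε
  | letin : TmTy S (tvarsCtx as ++ Γ) r e₁ B ε →
      TmTy S (.evar x (Scheme.close as B) :: Γ) r e₂ A ε →
      TmTy S Γ r (.letin x as e₁ e₂) A ε
  | resume : gs.length = as.length →
      (∀ a ∈ as, CtxEntry.tvar a ∈ Γ) →
      TmTy S (.evar x (.ty (A.subst (subList as (gs.map .tvar)))) :: (tvarsCtx gs ++ Γ))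
        (some (as, A, B, ε, D)) e (B.subst (subList as (gs.map .tvar))) ε' →
      ε ⊆ ε' →
      TmTy S Γ (some (as, A, B, ε, D)) (.resume gs x e) D ε'

/-- Handler typing `Γ; r ⊢ h : A | ε ⇒ B | ε'` of λ_eff^Λ. -/
inductive HTy (S : Sig) : Ctx → Resum → Handler → Ty → Eff → Ty → Eff → Prop
  | ret : TmTy S (.evar x (.ty A) :: Γ) r e B ε' → ε ⊆ ε' →
      HTy S Γ r (.ret x e) A ε B ε'
  | opH : HTy S Γ r h A ε B ε' →
      S.opSig o = (as₀, C₀, D₀) → as.length = as₀.length → o ∉ ε →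
      TmTy S (.evar x (.ty (C₀.subst (subList as₀ (as.map .tvar)))) :: (tvarsCtx as ++ Γ))
        (some (as, C₀.subst (subList as₀ (as.map .tvar)),
               D₀.subst (subList as₀ (as.map .tvar)), ε', B)) e B ε' →
      HTy S Γ r (.opH h as o x e) A (insert o ε) B ε'

/-- Continuation typing `Γ ⊢ E : σ ⊸ A | ε` of λ_eff^Λ. -/
inductive ETy (S : Sig) : Ctx → ECtx → Scheme → Ty → Eff → Prop
  | hole : CtxWF Γ → ETy S Γ .hole (.ty A) A ε
  | appL : ETy S Γ E σ (.arrow A ε' B) ε → TmTy S Γ none e₂ A ε → ε' ⊆ ε →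
      ETy S Γ (.appL E e₂) σ B ε
  | appR : IsValue v → TmTy S Γ none v (.arrow A ε' B) ε → ETy S Γ E σ A ε → ε' ⊆ ε →
      ETy S Γ (.appR v E) σ B ε
  | opE : S.opSig o = (as, A, B) → o ∈ ε →
      (∀ C ∈ Cs, wfTy Γ C) → Cs.length = as.length →
      ETy S Γ E σ (A.subst (subList as Cs)) ε →
      ETy S Γ (.opE o Cs E) σ (B.subst (subList as Cs)) ε
  | handleE : ETy S Γ E σ B ε' → HTy S Γ none h B ε' A ε →
      ETy S Γ (.handleE E h) σ A ε
  | weak : ETy S Γ E σ A ε → ε ⊆ ε' → ETy S Γ E σ A ε'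
  | letE : ETy S (tvarsCtx as ++ Γ) E σ B ε →
      TmTy S (.evar x (Scheme.close as B) :: Γ) none e A ε →
      ETy S Γ (.letE x as E e) (Scheme.allEach as σ) A ε
end
/-! ## The surface language λ_eff^let -/

mutual
/-- Terms of `λ_eff^let`. -/
inductive STm : Type
  | var    : ℕ → STm
  | const  : ℕ → STm
  | abs    : ℕ → STm → STm
  | app    : STm → STm → STm
  | letin  : ℕ → STm → STm → STm
  | op     : ℕ → STm → STm
  | handle : STm → SHandler → STm
  | resume : STm → STm

/-- Handlers of `λ_eff^let`. -/
inductive SHandler : Type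
  | ret : ℕ → STm → SHandler
  | opH : SHandler → ℕ → ℕ → STm → SHandler
end

/-- Surface resumption types `R ::= none | (ᾱ, x : A, B →ε C)`. -/
abbrev SResum := Option (List ℕ × ℕ × Ty × Ty × Eff × Ty)

/-- Elaboration `R ⤳ r` of resumption types (dropping the bound variable). -/
def elabR : SResum → Resum
  | none => none
  | some (as, _, A, B, ε, C) => some (as, A, B, ε, C)

mutual
/-- Term typing `Γ; R ⊢ M : A | ε` of λ_eff^let (Figure 2). -/
inductive STmTy (S : Sig) : Ctx → SResum → STm → Ty → Eff → Prop
  | var : CtxWF Γ → CtxEntry.evar x (Scheme.close as A) ∈ Γ →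
      (∀ B ∈ Bs, wfTy Γ B) → Bs.length = as.length →
      STmTy S Γ R (.var x) (A.subst (subList as Bs)) ε
  | const : CtxWF Γ → STmTy S Γ R (.const c) (S.tyc c) ε
  | abs : STmTy S (.evar x (.ty A) :: Γ) R M B ε' →
      STmTy S Γ R (.abs x M) (.arrow A ε' B) ε
  | app : STmTy S Γ R M₁ (.arrow A ε' B) ε → STmTy S Γ R M₂ A ε → ε' ⊆ ε →
      STmTy S Γ R (.app M₁ M₂) B ε
  | letin : STmTy S (tvarsCtx as ++ Γ) R M₁ B ε →
      STmTy S (.evar x (Scheme.close as B) :: Γ) R M₂ A ε →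
      STmTy S Γ R (.letin x M₁ M₂) A ε
  | weak : STmTy S Γ R M A ε → ε ⊆ ε' → STmTy S Γ R M A ε'
  | op : S.opSig o = (as, A, B) → o ∈ ε →
      (∀ C ∈ Cs, wfTy Γ C) → Cs.length = as.length →
      STmTy S Γ R M (A.subst (subList as Cs)) ε →
      STmTy S Γ R (.op o M) (B.subst (subList as Cs)) ε
  | handle : STmTy S Γ R M B ε' → SHTy S Γ R H B ε' A ε →
      STmTy S Γ R (.handle M H) A ε
  | resume :
      CtxWF (Γ₂ ++ .evar x (.ty D) :: Γ₁) →
      (∀ a ∈ as, CtxEntry.tvar a ∈ Γ₁) →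
      bs.length = as.length →
      STmTy S (.evar x (.ty (A.subst (subList as (bs.map .tvar)))) ::
                 (tvarsCtx bs ++ (Γ₂ ++ Γ₁)))
        (some (as, x, A, B, ε₀, C)) M (B.subst (subList as (bs.map .tvar))) ε →
      ε₀ ⊆ ε →
      STmTy S (Γ₂ ++ .evar x (.ty D) :: Γ₁) (some (as, x, A, B, ε₀, C)) (.resume M) C ε

/-- Handler typing `Γ; R ⊢ H : A | ε ⇒ B | ε'` of λ_eff^let (Figure 2). -/
inductive SHTy (S : Sig) : Ctx → SResum → SHandler → Ty → Eff → Ty → Eff → Prop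
  | ret : STmTy S (.evar x (.ty A) :: Γ) R M B ε' → ε ⊆ ε' →
      SHTy S Γ R (.ret x M) A ε B ε'
  | opH : SHTy S Γ R H A ε B ε' → S.opSig o = (as, C, D) → o ∉ ε →
      STmTy S (.evar x (.ty C) :: (tvarsCtx as ++ Γ)) (some (as, x, C, D, ε', B)) M B ε' →
      SHTy S Γ R (.opH H o x M) A (insert o ε) B ε'
end

/-! ## Elaboration from λ_eff^let to λ_eff^Λ (Figure 7) -/

mutual
/-- Elaboration `Γ; R ⊢ M : A | ε ⤳_m e` of λ_eff^let typing derivations to λ_eff^Λ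
terms, where `m` maps surface variables to intermediate variables. -/
inductive Elab (S : Sig) : Ctx → SResum → STm → Ty → Eff → (ℕ → ℕ) → Tm → Prop
  | var : CtxWF Γ → CtxEntry.evar x (Scheme.close as A) ∈ Γ →
      (∀ B ∈ Bs, wfTy Γ B) → Bs.length = as.length →
      Elab S Γ R (.var x) (A.subst (subList as Bs)) ε m (.var (m x) Bs)
  | const : CtxWF Γ → Elab S Γ R (.const c) (S.tyc c) ε m (.const c)
  | abs : Elab S (.evar x (.ty A) :: Γ) R M B ε' (Function.update m x y) e →
      Elab S Γ R (.abs x M) (.arrow A ε' B) ε m (.abs y e)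
  | app : Elab S Γ R M₁ (.arrow A ε' B) ε m e₁ → Elab S Γ R M₂ A ε m e₂ → ε' ⊆ ε →
      Elab S Γ R (.app M₁ M₂) B ε m (.app e₁ e₂)
  | letin : Elab S (tvarsCtx as ++ Γ) R M₁ B ε m e₁ →
      Elab S (.evar x (Scheme.close as B) :: Γ) R M₂ A ε (Function.update m x y) e₂ →
      Elab S Γ R (.letin x M₁ M₂) A ε m (.letin y as e₁ e₂)
  | weak : Elab S Γ R M A ε m e → ε ⊆ ε' → Elab S Γ R M A ε' m e
  | op : S.opSig o = (as, A, B) → o ∈ ε →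
      (∀ C ∈ Cs, wfTy Γ C) → Cs.length = as.length →
      Elab S Γ R M (A.subst (subList as Cs)) ε m e →
      Elab S Γ R (.op o M) (B.subst (subList as Cs)) ε m (.op o Cs e)
  | handle : Elab S Γ R M B ε' m e → ElabH S Γ R H B ε' A ε m h →
      Elab S Γ R (.handle M H) A ε m (.handle e h)
  | resume :
      CtxWF (Γ₂ ++ .evar x (.ty D) :: Γ₁) →
      (∀ a ∈ as, CtxEntry.tvar a ∈ Γ₁) →
      bs.length = as.length →
      Elab S (.evar x (.ty (A.subst (subList as (bs.map .tvar)))) ::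
                (tvarsCtx bs ++ (Γ₂ ++ Γ₁)))
        (some (as, x, A, B, ε₀, C)) M (B.subst (subList as (bs.map .tvar))) ε
        (Function.update m x y) e →
      ε₀ ⊆ ε →
      Elab S (Γ₂ ++ .evar x (.ty D) :: Γ₁) (some (as, x, A, B, ε₀, C)) (.resume M) C ε m
        (.resume bs y e)

/-- Elaboration `Γ; R ⊢ H : A | ε ⇒ B | ε' ⤳_m h` of handler typing derivations. -/
inductive ElabH (S : Sig) :
    Ctx → SResum → SHandler → Ty → Eff → Ty → Eff → (ℕ → ℕ) → Handler → Prop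
  | ret : Elab S (.evar x (.ty A) :: Γ) R M B ε' (Function.update m x y) e → ε ⊆ ε' →
      ElabH S Γ R (.ret x M) A ε B ε' m (.ret y e)
  | opH : ElabH S Γ R H A ε B ε' m h → S.opSig o = (as, C, D) → o ∉ ε →
      Elab S (.evar x (.ty C) :: (tvarsCtx as ++ Γ)) (some (as, x, C, D, ε', B)) M B ε'
        (Function.update m x y) e →
      ElabH S Γ R (.opH H o x M) A (insert o ε) B ε' m (.opH h as o y e)
end

/-- Elaboration `Γ ⤳_m Γ'` of typing contexts. -/
inductive ElabCtx : Ctx → (ℕ → ℕ) → Ctx → Prop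
  | nil : ElabCtx [] id []
  | evar : ElabCtx Γ m Γ' →
      ElabCtx (.evar x σ :: Γ) (Function.update m x y) (.evar y σ :: Γ')
  | tvar : ElabCtx Γ m Γ' → ElabCtx (.tvar a :: Γ) m (.tvar a :: Γ')

/-- **Continuation (bubbling invocation) inversion for λ_eff^Λ**: if
`Γ; r ⊢ #op(σ̄, Λb̄s.w, E) : D | ε`, then there exist `ᾱ, C̄, A, B, ε'` such that
each `σ_i = ∀b̄s.C_i`, `w` is a value, `E` binds exactly `b̄s` at its hole, `ε' ⊆ ε`,
`ty(op) = ∀ᾱ. A ↪ B`, `op ∈ ε'`, `Γ ⊢ ∀b̄s.C_i` for each `i`,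
`Γ, b̄s; r ⊢ w : A[C̄/ᾱ] | ε'`, and `Γ ⊢ E : ∀b̄s.(B[C̄/ᾱ]) ⊸ D | ε'`. -/
theorem opcont_inversion (S : Sig) (Γ : Ctx) (r : Resum) (o : ℕ) (σs : List Scheme)
    (bs : List ℕ) (w : Tm) (E : ECtx) (D : Ty) (ε : Eff)
    (h : TmTy S Γ r (.opCont o σs bs w E) D ε) :
    ∃ (as : List ℕ) (A B : Ty) (Cs : List Ty) (ε' : Eff),
      S.opSig o = (as, A, B) ∧
      σs = Cs.map (Scheme.close bs) ∧
      Cs.length = as.length ∧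
      IsValue w ∧
      ECtx.binders E = bs ∧
      ε' ⊆ ε ∧ o ∈ ε' ∧
      (∀ C ∈ Cs, wfScheme Γ (Scheme.close bs C)) ∧
      TmTy S (tvarsCtx bs ++ Γ) r w (A.subst (subList as Cs)) ε' ∧
      ETy S Γ E (Scheme.close bs (B.subst (subList as Cs))) D ε' := by
  -- Only the rule `opCont` and effect weakening `weak` can type an invocation term; the
  -- latter merely enlarges the ambient effect, so the effect of the `opCont` premise is `ε'`.
  generalize ht : Tm.opCont o σs bs w E = t at h
  induction h using TmTy.rec (motive_2 := fun _ _ _ _ _ _ _ _ => True)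
    (motive_3 := fun _ _ _ _ _ _ => True) with
  | opCont hsig hmem hwf hlen hbinders hval hw hE =>
    injection ht with ho hσs hbs hv hEq
    subst ho hbs hv hEq
    exact ⟨_, _, _, _, _, hsig, hσs, hlen, hval, hbinders, subset_rfl, hmem, hwf, hw, hE⟩
  | weak _ hsub ih =>
    obtain ⟨as, A, B, Cs, ε', hsig, hσs, hlen, hval, hbinders, hε', rest⟩ := ih ht
    exact ⟨as, A, B, Cs, ε', hsig, hσs, hlen, hval, hbinders, hε'.trans hsub, rest⟩
  | _ => trivial

end EffLam
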